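/- The mode-3 unfolding identity for third-order quaternion tensors: if Y = T ×_1 U1 ×_2 U2 ×_3 U3 (products applied in that order, each defined by left multiplication), then Unfold_3(Y) = U3 (( U2 ⊗ U1) Unfold_3(T)^T)^T, where ⊗ is the Kronecker product and ^T denotes non-conjugate transpose. -/

import Mathlib

open Matrix Quaternion BigOperators

/-- 1-mode product of a third-order quaternion tensor (left multiplication). -/
noncomputable def mode1 {N1 N2 N3 M : ℕ} (T : Fin N1 → Fin N2 → Fin N3 → ℍ[ℝ])
    (U : Matrix (Fin M) (Fin N1) ℍ[ℝ]) : Fin M → Fin N2 → Fin N3 → ℍ[ℝ] :=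
  fun m n2 n3 => ∑ n1, U m n1 * T n1 n2 n3

/-- 2-mode product of a third-order quaternion tensor (left multiplication). -/
noncomputable def mode2 {N1 N2 N3 M : ℕ} (T : Fin N1 → Fin N2 → Fin N3 → ℍ[ℝ])
    (U : Matrix (Fin M) (Fin N2) ℍ[ℝ]) : Fin N1 → Fin M → Fin N3 → ℍ[ℝ] :=
  fun n1 m n3 => ∑ n2, U m n2 * T n1 n2 n3

/-- 3-mode product of a third-order quaternion tensor (left multiplication). -/
noncomputable def mode3 {N1 N2 N3 M : ℕ} (T : Fin N1 → Fin N2 → Fin N3 → ℍ[ℝ])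
    (U : Matrix (Fin M) (Fin N3) ℍ[ℝ]) : Fin N1 → Fin N2 → Fin M → ℍ[ℝ] :=
  fun n1 n2 m => ∑ n3, U m n3 * T n1 n2 n3

/-- Mode-3 unfolding: mode-3 fibers become columns, indexed by the pair `(n2, n1)`. -/
def unfold3 {N1 N2 N3 : ℕ} (T : Fin N1 → Fin N2 → Fin N3 → ℍ[ℝ]) :
    Matrix (Fin N3) (Fin N2 × Fin N1) ℍ[ℝ] := fun n3 p => T p.2 p.1 n3

/-- Kronecker product `U2 ⊗ U1` of quaternion matrices,
`(U2 ⊗ U1)_{(n2,n1),(n2',n1')} = (u2)_{n2 n2'} (u1)_{n1 n1'}`. -/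
noncomputable def qkron {M2 M1 N2 N1 : ℕ} (U2 : Matrix (Fin M2) (Fin N2) ℍ[ℝ])
    (U1 : Matrix (Fin M1) (Fin N1) ℍ[ℝ]) :
    Matrix (Fin M2 × Fin M1) (Fin N2 × Fin N1) ℍ[ℝ] :=
  fun p q => U2 p.1 q.1 * U1 p.2 q.2

/-- Mode-3 unfolding identity: if `Y = T ×₁ U1 ×₂ U2 ×₃ U3`, then
`Unfold₃(Y) = U3 ((U2 ⊗ U1) Unfold₃(T)ᵀ)ᵀ`. -/
theorem unfold3_of_three_mode_products {N1 N2 N3 : ℕ}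
    (T : Fin N1 → Fin N2 → Fin N3 → ℍ[ℝ])
    (U1 : Matrix (Fin N1) (Fin N1) ℍ[ℝ]) (U2 : Matrix (Fin N2) (Fin N2) ℍ[ℝ])
    (U3 : Matrix (Fin N3) (Fin N3) ℍ[ℝ]) :
    unfold3 (mode3 (mode2 (mode1 T U1) U2) U3) =
      U3 * ((qkron U2 U1) * (unfold3 T)ᵀ)ᵀ := by
  funext n3 p
  obtain ⟨n2, n1⟩ := p
  simp only [unfold3, mode3, mode2, mode1, qkron, Matrix.mul_apply, Matrix.transpose_apply,
    Finset.mul_sum, Fintype.sum_prod_type, mul_assoc]
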